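/- If additionally λ < h, then there exists a constant C > 0 such that for every integer k ≥ 1 and every y ∈ [y_k, y_{k+1}), L(y) ≥ C·(h/λ)^k. Consequently L(y) → +∞ as y → y_∞ from the left, whereas L(y_∞) = π. -/

import Mathlib

open Real MeasureTheory Set Filter

noncomputable section

namespace StokesCounterexample

/-- `ySeq a k = Σ_{j=1}^k a^j` (so `ySeq a 0 = 0`). -/
def ySeq (a : ℝ) (k : ℕ) : ℝ := ∑ j ∈ Finset.range k, a ^ (j + 1)

/-- `yInf a = Σ_{j=1}^∞ a^j = a / (1 - a)`. -/
def yInf (a : ℝ) : ℝ := a / (1 - a)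

/-- `fSeq h l 0 = 0` and `fSeq h l k x = h^k · sin (x / l^k)` for `k ≥ 1`. -/
def fSeq (h l : ℝ) (k : ℕ) (x : ℝ) : ℝ :=
  if k = 0 then 0 else h ^ k * Real.sin (x / l ^ k)

open Classical in
/-- The interpolation `ψ(x,y) = (1 - φ_k(y))·f_k(x) + φ_k(y)·f_{k+1}(x)` for
`y ∈ [y_k, y_{k+1})`, where `φ_k(y) = φ((y - y_k)/a^(k+1))`, extended by `0`
outside of `⋃_k [y_k, y_{k+1})` (in particular `ψ(x, y_∞) = 0`). -/
def psi (a h l : ℝ) (φ : ℝ → ℝ) (x y : ℝ) : ℝ :=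
  if hk : ∃ k : ℕ, ySeq a k ≤ y ∧ y < ySeq a (k + 1) then
    (1 - φ ((y - ySeq a hk.choose) / a ^ (hk.choose + 1))) * fSeq h l hk.choose x
      + φ ((y - ySeq a hk.choose) / a ^ (hk.choose + 1)) * fSeq h l (hk.choose + 1) x
  else 0

/-- The partial derivative of `ψ` in the first variable. -/
def psi₁ (a h l : ℝ) (φ : ℝ → ℝ) (x y : ℝ) : ℝ :=
  deriv (fun t => psi a h l φ t y) x

/-- The partial derivative of `ψ` in the second variable. -/
def psi₂ (a h l : ℝ) (φ : ℝ → ℝ) (x y : ℝ) : ℝ :=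
  deriv (fun s => psi a h l φ x s) y

/-- The arc length `L(x,y) = ∫_0^x √(1 + (∂₁ψ(t,y))²) dt`. -/
def arc (a h l : ℝ) (φ : ℝ → ℝ) (x y : ℝ) : ℝ :=
  ∫ t in (0:ℝ)..x, Real.sqrt (1 + psi₁ a h l φ t y ^ 2)

/-- The length `L(y) = L(π, y)` of the section of the graph of `ψ` at height `y`. -/
def len (a h l : ℝ) (φ : ℝ → ℝ) (y : ℝ) : ℝ := arc a h l φ π y

/-!
On the strip `[y_k, y_{k+1})`, with `λ = 1/N` and `c = φ_k(y) ∈ [0,1]`, the slope is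
`∂₁ψ(t,y) = (1-c)(h/λ)^k cos(N^k t) + c (h/λ)^{k+1} cos(N^{k+1} t)`. The length
`∫₀^π √(1 + (∂₁ψ)²)` dominates `|∫₀^π ∂₁ψ(t,y) cos(N^j t) dt|`, which by orthogonality of the
integer-frequency cosines on `[0,π]` is `π/2` times either coefficient. As `h/λ > 1`, one of
the two coefficients is at least `(h/λ)^k / 2`, so `L(y) ≥ (π/4)(h/λ)^k`; letting `k → ∞` as
`y → y_∞⁻` gives the blow-up. At `y_∞` no strip applies, `ψ` vanishes and `L(y_∞) = π`.
-/

open Topology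

lemma ySeq_succ (a : ℝ) (k : ℕ) : ySeq a (k + 1) = ySeq a k + a ^ (k + 1) :=
  Finset.sum_range_succ _ _

lemma ySeq_strictMono {a : ℝ} (ha : 0 < a) : StrictMono (ySeq a) :=
  strictMono_nat_of_lt_succ fun k => by
    rw [ySeq_succ]
    exact lt_add_of_pos_right _ (by positivity)

lemma tendsto_ySeq {a : ℝ} (ha0 : 0 < a) (ha1 : a < 1) :
    Tendsto (ySeq a) atTop (𝓝 (yInf a)) := by
  have hsum : HasSum (fun j : ℕ => a ^ (j + 1)) (yInf a) := by
    simpa only [pow_succ', yInf, div_eq_mul_inv] using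
      (hasSum_geometric_of_lt_one ha0.le ha1).mul_left a
  exact hsum.tendsto_sum_nat

lemma ySeq_lt_yInf {a : ℝ} (ha0 : 0 < a) (ha1 : a < 1) (k : ℕ) : ySeq a k < yInf a :=
  (ySeq_strictMono ha0 (Nat.lt_succ_self k)).trans_le
    ((ySeq_strictMono ha0).monotone.ge_of_tendsto (tendsto_ySeq ha0 ha1) (k + 1))

lemma eq_of_mem_strip {a : ℝ} (ha : 0 < a) {j k : ℕ} {y : ℝ}
    (hj : y ∈ Ico (ySeq a j) (ySeq a (j + 1))) (hk : y ∈ Ico (ySeq a k) (ySeq a (k + 1))) :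
    j = k := by
  have hmono := (ySeq_strictMono ha).monotone
  by_contra hne
  rcases Nat.lt_or_gt_of_ne hne with hlt | hlt
  · exact (hj.2.trans_le (hmono hlt)).not_ge hk.1
  · exact (hk.2.trans_le (hmono hlt)).not_ge hj.1

lemma exists_ge_mem_strip {a : ℝ} (ha0 : 0 < a) (ha1 : a < 1) {k : ℕ} {y : ℝ}
    (hky : ySeq a k ≤ y) (hy : y < yInf a) :
    ∃ j, k ≤ j ∧ y ∈ Ico (ySeq a j) (ySeq a (j + 1)) := by
  classical
  have hex : ∃ n, y < ySeq a n :=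
    ((tendsto_ySeq ha0 ha1).eventually (eventually_gt_nhds hy)).exists
  have hmono := (ySeq_strictMono ha0).monotone
  have hkn : k < Nat.find hex := by
    by_contra! hle
    exact (Nat.find_spec hex).not_ge (hky.trans' (hmono hle))
  obtain ⟨j, hj⟩ : ∃ j, Nat.find hex = j + 1 := Nat.exists_eq_add_one.2 (by omega)
  exact ⟨j, by omega, not_lt.1 (Nat.find_min hex (by omega)), hj ▸ Nat.find_spec hex⟩

lemma tendsto_atTop_of_le_on_strips {a : ℝ} (ha0 : 0 < a) (ha1 : a < 1) {F : ℝ → ℝ}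
    {C r : ℝ} (hC : 0 < C) (hr : 1 < r)
    (hF : ∀ k : ℕ, 1 ≤ k → ∀ y : ℝ, ySeq a k ≤ y → y < ySeq a (k + 1) → C * r ^ k ≤ F y) :
    Tendsto F (𝓝[<] (yInf a)) atTop := by
  refine tendsto_atTop.2 fun M => ?_
  have hpow : Tendsto (fun k : ℕ => C * r ^ k) atTop atTop :=
    (tendsto_pow_atTop_atTop_of_one_lt hr).const_mul_atTop hC
  obtain ⟨k, hkM, hk1⟩ := ((hpow.eventually_ge_atTop M).and (eventually_ge_atTop 1)).exists
  filter_upwards [Ioo_mem_nhdsLT (ySeq_lt_yInf ha0 ha1 k)] with y hy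
  obtain ⟨j, hkj, hyj⟩ := exists_ge_mem_strip ha0 ha1 hy.1.le hy.2
  calc M ≤ C * r ^ k := hkM
    _ ≤ C * r ^ j := by gcongr; exact hr.le
    _ ≤ F y := hF j (hk1.trans hkj) y hyj.1 hyj.2

lemma integral_cos_intCast_mul (n : ℤ) :
    ∫ t in (0:ℝ)..π, cos (n * t) = if n = 0 then π else 0 := by
  split_ifs with hn
  · simp [hn]
  · have hn' : (n : ℝ) ≠ 0 := Int.cast_ne_zero.2 hn
    simp [intervalIntegral.integral_comp_mul_left (fun t => cos t) hn', integral_cos,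
      sin_int_mul_pi]

lemma integral_cos_natCast_mul_cos_natCast_mul {p q : ℕ} (hpq : p + q ≠ 0) :
    ∫ t in (0:ℝ)..π, cos (p * t) * cos (q * t) = if p = q then π / 2 else 0 := by
  have hprod : ∀ t : ℝ, cos (p * t) * cos (q * t)
      = (cos (((p - q : ℤ) : ℝ) * t) + cos (((p + q : ℤ) : ℝ) * t)) / 2 := fun t => by
    push_cast
    rw [sub_mul, add_mul, ← two_mul_cos_mul_cos]
    ring
  simp_rw [hprod]
  rw [intervalIntegral.integral_div, intervalIntegral.integral_add
      (Continuous.intervalIntegrable (by fun_prop) _ _)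
      (Continuous.intervalIntegrable (by fun_prop) _ _),
    integral_cos_intCast_mul, integral_cos_intCast_mul]
  have hsum : (p + q : ℤ) ≠ 0 := by omega
  by_cases h : p = q
  · simp [h]; omega
  · simp [h, hsum, sub_eq_zero]

lemma integral_cos_combination_mul_cos (A B : ℝ) {p q : ℕ} (hp : p ≠ 0) (hpq : p ≠ q) :
    ∫ t in (0:ℝ)..π, (A * cos (p * t) + B * cos (q * t)) * cos (p * t) = A * (π / 2) := by
  have hsplit : ∀ t : ℝ, (A * cos (p * t) + B * cos (q * t)) * cos (p * t)
      = A * (cos (p * t) * cos (p * t)) + B * (cos (q * t) * cos (p * t)) := fun t => by ring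
  simp_rw [hsplit]
  rw [intervalIntegral.integral_add (Continuous.intervalIntegrable (by fun_prop) _ _)
      (Continuous.intervalIntegrable (by fun_prop) _ _),
    intervalIntegral.integral_const_mul, intervalIntegral.integral_const_mul,
    integral_cos_natCast_mul_cos_natCast_mul (by omega),
    integral_cos_natCast_mul_cos_natCast_mul (by omega), if_pos rfl, if_neg (Ne.symm hpq)]
  ring

lemma abs_integral_mul_cos_le_integral_sqrt {g : ℝ → ℝ} (hg : Continuous g) {a b : ℝ}
    (hab : a ≤ b) (c : ℝ) :
    |∫ t in a..b, g t * cos (c * t)| ≤ ∫ t in a..b, √(1 + g t ^ 2) := by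
  refine (intervalIntegral.abs_integral_le_integral_abs hab).trans
    (intervalIntegral.integral_mono_on hab (Continuous.intervalIntegrable (by fun_prop) _ _)
      (Continuous.intervalIntegrable (by fun_prop) _ _) fun t _ => ?_)
  calc |g t * cos (c * t)| ≤ |g t| := by
        rw [abs_mul]; exact mul_le_of_le_one_right (abs_nonneg _) (abs_cos_le_one _)
    _ = √(g t ^ 2) := (sqrt_sq_eq_abs _).symm
    _ ≤ √(1 + g t ^ 2) := sqrt_le_sqrt (by linarith)

lemma abs_mul_pi_div_two_le_integral_sqrt (A B : ℝ) {p q : ℕ} (hp : p ≠ 0) (hpq : p ≠ q) :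
    |A| * (π / 2) ≤ ∫ t in (0:ℝ)..π, √(1 + (A * cos (p * t) + B * cos (q * t)) ^ 2) := by
  calc |A| * (π / 2)
        = |∫ t in (0:ℝ)..π, (A * cos (p * t) + B * cos (q * t)) * cos (p * t)| := by
        rw [integral_cos_combination_mul_cos A B hp hpq, abs_mul, abs_of_pos (half_pos pi_pos)]
    _ ≤ _ := abs_integral_mul_cos_le_integral_sqrt (by fun_prop) pi_pos.le _

lemma hasDerivAt_fSeq (h l : ℝ) {k : ℕ} (hk : k ≠ 0) (x : ℝ) :
    HasDerivAt (fSeq h l k) ((h / l) ^ k * cos (x / l ^ k)) x := by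
  have hf : fSeq h l k = fun x => h ^ k * sin (x / l ^ k) := funext fun x => if_neg hk
  rw [hf]
  refine ((((hasDerivAt_id x).div_const (l ^ k)).sin).const_mul (h ^ k)).congr_deriv ?_
  rw [id, div_pow]
  ring

lemma half_le_max_one_sub_mul_mul {c r x : ℝ} (hc : c ∈ Icc (0:ℝ) 1) (hr : 1 ≤ r)
    (hx : 0 ≤ x) :
    x / 2 ≤ max ((1 - c) * x) (c * (r * x)) := by
  rcases le_total c (1 / 2) with hc2 | hc2
  · exact le_max_of_le_left (by nlinarith)
  · exact le_max_of_le_right (by nlinarith [mul_nonneg (mul_nonneg hc.1 (sub_nonneg.2 hr)) hx])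

section Strip

variable {a h l : ℝ} {φ : ℝ → ℝ} {k N : ℕ} {y : ℝ}

lemma psi_of_mem_strip (ha : 0 < a) (hy : y ∈ Ico (ySeq a k) (ySeq a (k + 1))) (x : ℝ) :
    psi a h l φ x y = (1 - φ ((y - ySeq a k) / a ^ (k + 1))) * fSeq h l k x
      + φ ((y - ySeq a k) / a ^ (k + 1)) * fSeq h l (k + 1) x := by
  have hex : ∃ j : ℕ, ySeq a j ≤ y ∧ y < ySeq a (j + 1) := ⟨k, hy⟩
  rw [psi, dif_pos hex, eq_of_mem_strip ha hex.choose_spec hy]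

lemma psi₁_of_mem_strip (ha : 0 < a) (hk : k ≠ 0) (hy : y ∈ Ico (ySeq a k) (ySeq a (k + 1)))
    (x : ℝ) :
    psi₁ a h l φ x y = (1 - φ ((y - ySeq a k) / a ^ (k + 1))) * (h / l) ^ k * cos (x / l ^ k)
      + φ ((y - ySeq a k) / a ^ (k + 1)) * (h / l) ^ (k + 1) * cos (x / l ^ (k + 1)) := by
  rw [psi₁, funext (psi_of_mem_strip ha hy)]
  simp only [mul_assoc]
  exact (((hasDerivAt_fSeq h l hk x).const_mul _).add
    ((hasDerivAt_fSeq h l k.succ_ne_zero x).const_mul _)).deriv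

lemma len_eq_integral_of_mem_strip (ha : 0 < a) (hk : k ≠ 0)
    (hy : y ∈ Ico (ySeq a k) (ySeq a (k + 1))) :
    len a h (N : ℝ)⁻¹ φ y = ∫ t in (0:ℝ)..π,
      √(1 + ((1 - φ ((y - ySeq a k) / a ^ (k + 1))) * (h * N) ^ k * cos ((N ^ k : ℕ) * t)
        + φ ((y - ySeq a k) / a ^ (k + 1)) * (h * N) ^ (k + 1) * cos ((N ^ (k + 1) : ℕ) * t))
        ^ 2) := by
  refine intervalIntegral.integral_congr fun t _ => ?_
  simp only [psi₁_of_mem_strip ha hk hy, div_inv_eq_mul, inv_pow, Nat.cast_pow, mul_comm t]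

lemma pi_div_four_mul_pow_le_len (ha : 0 < a) (hN : 1 < N) (hhN : 1 < h * N)
    (hφ : ∀ t, φ t ∈ Icc (0:ℝ) 1) (hk : k ≠ 0) (hy : y ∈ Ico (ySeq a k) (ySeq a (k + 1))) :
    π / 4 * (h * N) ^ k ≤ len a h (N : ℝ)⁻¹ φ y := by
  set c := φ ((y - ySeq a k) / a ^ (k + 1))
  set r := h * N
  have hpq : N ^ k ≠ N ^ (k + 1) := (Nat.pow_lt_pow_right hN k.lt_succ_self).ne
  have hA := abs_mul_pi_div_two_le_integral_sqrt ((1 - c) * r ^ k) (c * r ^ (k + 1))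
    (pow_ne_zero k (by omega)) hpq
  have hB := abs_mul_pi_div_two_le_integral_sqrt (c * r ^ (k + 1)) ((1 - c) * r ^ k)
    (pow_ne_zero (k + 1) (by omega)) hpq.symm
  simp only [add_comm (c * r ^ (k + 1) * _)] at hB
  rw [len_eq_integral_of_mem_strip ha hk hy]
  calc π / 4 * r ^ k = r ^ k / 2 * (π / 2) := by ring
    _ ≤ max |(1 - c) * r ^ k| |c * r ^ (k + 1)| * (π / 2) := by
        gcongr
        rw [pow_succ']
        exact (half_le_max_one_sub_mul_mul (hφ _) hhN.le (by positivity)).trans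
          (max_le_max (le_abs_self _) (le_abs_self _))
    _ = max (|(1 - c) * r ^ k| * (π / 2)) (|c * r ^ (k + 1)| * (π / 2)) :=
        max_mul_of_nonneg _ _ (by positivity)
    _ ≤ _ := max_le hA hB

end Strip

lemma len_yInf {a : ℝ} (ha0 : 0 < a) (ha1 : a < 1) (h l : ℝ) (φ : ℝ → ℝ) :
    len a h l φ (yInf a) = π := by
  have hnot : ¬ ∃ k : ℕ, ySeq a k ≤ yInf a ∧ yInf a < ySeq a (k + 1) :=
    fun ⟨k, _, hk⟩ => hk.not_gt (ySeq_lt_yInf ha0 ha1 (k + 1))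
  have hpsi : (fun x => psi a h l φ x (yInf a)) = fun _ => 0 := funext fun x => dif_neg hnot
  simp [len, arc, psi₁, hpsi]

theorem len_blows_up_general (a h l : ℝ) (ha0 : 0 < a) (ha1 : a < 1)
    (hl1 : l < 1) (hlN : ∃ N : ℕ, 0 < N ∧ l = 1 / N)
    (φ : ℝ → ℝ)
    (hφ01 : ∀ t, φ t ∈ Set.Icc (0:ℝ) 1)
    (hlh : l < h) :
    (∃ C : ℝ, 0 < C ∧ ∀ k : ℕ, 1 ≤ k → ∀ y : ℝ, ySeq a k ≤ y → y < ySeq a (k + 1) →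
      C * (h / l) ^ k ≤ len a h l φ y) ∧
    Tendsto (len a h l φ) (nhdsWithin (yInf a) (Set.Iio (yInf a))) atTop ∧
    len a h l φ (yInf a) = π := by
  obtain ⟨N, hN0, rfl⟩ := hlN
  have hN : 1 < N := by
    by_contra! hN1
    obtain rfl : N = 1 := by omega
    norm_num at hl1
  have hhN : 1 < h * N := (div_lt_iff₀ (by positivity)).1 hlh
  have hbound : ∀ k : ℕ, 1 ≤ k → ∀ y : ℝ, ySeq a k ≤ y → y < ySeq a (k + 1) →
      π / 4 * (h / (1 / N)) ^ k ≤ len a h (1 / N) φ y := fun k hk y hy1 hy2 => by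
    rw [one_div, div_inv_eq_mul]
    exact pi_div_four_mul_pow_le_len ha0 hN hhN hφ01 (by omega) ⟨hy1, hy2⟩
  have hratio : 1 < h / (1 / N) := by rwa [one_div, div_inv_eq_mul]
  exact ⟨⟨π / 4, by positivity, hbound⟩,
    tendsto_atTop_of_le_on_strips ha0 ha1 (by positivity) hratio hbound, len_yInf ha0 ha1 _ _ _⟩

/-- If moreover `λ < h`, the section lengths satisfy `L(y) ≥ C (h/λ)^k` on `[y_k, y_{k+1})`
for `k ≥ 1`; consequently `L(y) → ∞` as `y → y_∞⁻`, whereas `L(y_∞) = π`. -/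
theorem len_blows_up (a h l : ℝ) (ha0 : 0 < a) (ha1 : a < 1) (hh0 : 0 < h) (hh1 : h < 1)
    (hl0 : 0 < l) (hl1 : l < 1) (hlN : ∃ N : ℕ, 0 < N ∧ l = 1 / N)
    (φ : ℝ → ℝ) (hφsmooth : ContDiff ℝ (⊤ : ℕ∞) φ) (hφmono : Monotone φ)
    (hφ01 : ∀ t, φ t ∈ Set.Icc (0:ℝ) 1)
    (hφd0 : ∀ t, 0 ≤ deriv φ t) (hφd2 : ∀ t, deriv φ t ≤ 2)
    (hφ0 : ∃ ε > 0, ∀ t < ε, φ t = 0) (hφ1 : ∃ ε > 0, ∀ t > 1 - ε, φ t = 1)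
    (hlh : l < h) :
    (∃ C : ℝ, 0 < C ∧ ∀ k : ℕ, 1 ≤ k → ∀ y : ℝ, ySeq a k ≤ y → y < ySeq a (k + 1) →
      C * (h / l) ^ k ≤ len a h l φ y) ∧
    Tendsto (len a h l φ) (nhdsWithin (yInf a) (Set.Iio (yInf a))) atTop ∧
    len a h l φ (yInf a) = π :=
  len_blows_up_general a h l ha0 ha1 hl1 hlN φ hφ01 hlh

end StokesCounterexample
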